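/- arXiv:2111.05637 — 5 statements merged into one kernel-verified Lean document; each statement's English description precedes it below -/
import Mathlib

section
/- Liminf inequality for the penalized Deep Ritz functionals: In the Setting (Assumptions (A1) and (A3) are not needed here), for every x ∈ X and every sequence (x_n) in X converging weakly to x, one has F^f(x) ≤ liminf_{n→∞} F_n^f(x_n). In particular, if γ(x) ≠ 0 then liminf_{n→∞} F_n^f(x_n) = ∞. -/
open Filter Topology
open scoped Classical

/-- Weak convergence of a sequence in a normed space: convergence tested against
every continuous linear functional. -/
def WeakTendsto {X : Type*} [NormedAddCommGroup X] [NormedSpace ℝ X]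
    (u : ℕ → X) (x : X) : Prop :=
  ∀ φ : X →L[ℝ] ℝ, Tendsto (fun n => φ (u n)) atTop (𝓝 (φ x))

/-!
The penalized functional dominates `E (u n) + λₙ ‖γ (u n)‖ ^ p - f (u n)`, and the liminf of
this sum is at least the sum of the liminfs. The `E`-term is controlled by weak lower
semicontinuity and the `f`-term converges. The penalty term is nonnegative, and if `γ x ≠ 0`
it tends to `∞`: weak convergence passes through `γ`, and the norm is weakly lower
semicontinuous (test against a norming functional), so `‖γ (u n)‖` eventually stays above
`‖γ x‖ / 2 > 0` while `λₙ → ∞`.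
-/

namespace WeakTendsto

variable {X : Type*} [NormedAddCommGroup X] [NormedSpace ℝ X] {u : ℕ → X} {x : X}

theorem map {B : Type*} [NormedAddCommGroup B] [NormedSpace ℝ B] (hu : WeakTendsto u x)
    (T : X →L[ℝ] B) : WeakTendsto (fun n => T (u n)) (T x) :=
  fun φ => hu (φ.comp T)

theorem eventually_lt_norm (hu : WeakTendsto u x) {c : ℝ} (hc : c < ‖x‖) :
    ∀ᶠ n in atTop, c < ‖u n‖ := by
  obtain ⟨g, hg, hgx⟩ := exists_dual_vector'' ℝ x
  have hcg : c < g x := by rwa [hgx, RCLike.ofReal_real_eq_id, id]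
  filter_upwards [(hu g).eventually_const_lt hcg] with n hn
  calc c < g (u n) := hn
    _ ≤ ‖g‖ * ‖u n‖ := (le_abs_self _).trans (g.le_opNorm _)
    _ ≤ ‖u n‖ := mul_le_of_le_one_left (norm_nonneg _) hg

end WeakTendsto

theorem tendsto_mul_rpow_atTop_of_eventually_le {ι : Type*} {l : Filter ι} {lam a : ι → ℝ}
    {c p : ℝ} (hlam : Tendsto lam l atTop) (hc : 0 < c) (hp : 0 ≤ p)
    (ha : ∀ᶠ i in l, c ≤ a i) : Tendsto (fun i => lam i * a i ^ p) l atTop := by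
  refine tendsto_atTop_mono' l ?_ (hlam.atTop_mul_const (Real.rpow_pos_of_pos hc p))
  filter_upwards [ha, hlam.eventually_ge_atTop 0] with i hai hlami
  exact mul_le_mul_of_nonneg_left (Real.rpow_le_rpow hc.le hai hp) hlami

theorem zero_le_liminf_coe_mul_rpow {ι : Type*} {l : Filter ι} {lam a : ι → ℝ} (p : ℝ)
    (hlam : Tendsto lam l atTop) (ha : ∀ i, 0 ≤ a i) :
    (0 : EReal) ≤ liminf (fun i => ((lam i * a i ^ p : ℝ) : EReal)) l :=
  le_liminf_of_le (h := hlam.eventually_ge_atTop 0 |>.mono fun i hi =>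
    EReal.coe_nonneg.2 (mul_nonneg hi (Real.rpow_nonneg (ha i) p)))

theorem EReal.add_liminf_add_le_liminf {ι : Type*} {l : Filter ι} [l.NeBot] {Φ : ι → EReal}
    {e q g : ι → ℝ} {e₀ g₀ : ℝ}
    (he : (e₀ : EReal) ≤ liminf (fun i => (e i : EReal)) l)
    (hg : Tendsto g l (𝓝 g₀)) (hΦ : ∀ i, ((e i + q i + g i : ℝ) : EReal) ≤ Φ i) :
    (e₀ : EReal) + liminf (fun i => (q i : EReal)) l + g₀ ≤ liminf Φ l := by
  calc (e₀ : EReal) + liminf (fun i => (q i : EReal)) l + g₀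
      ≤ liminf (fun i => (e i : EReal)) l + liminf (fun i => (q i : EReal)) l
          + liminf (fun i => (g i : EReal)) l := by
        rw [(EReal.tendsto_coe.2 hg).liminf_eq]
        gcongr
    _ ≤ liminf (fun i => (e i : EReal) + q i) l + liminf (fun i => (g i : EReal)) l := by
        gcongr
        exact EReal.le_liminf_add
    _ ≤ liminf (fun i => (e i : EReal) + q i + g i) l := EReal.le_liminf_add
    _ ≤ liminf Φ l := liminf_le_liminf (Eventually.of_forall fun i => by exact_mod_cast hΦ i)

theorem deep_ritz_liminf_inequality_general
    {X B : Type*} [NormedAddCommGroup X] [NormedSpace ℝ X]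
    [NormedAddCommGroup B] [NormedSpace ℝ B]
    (γ : X →L[ℝ] B)
    (E : X → ℝ)
    -- E is (sequentially) lower semicontinuous w.r.t. the weak topology of X
    (hElsc : ∀ (x : X) (u : ℕ → X), WeakTendsto u x →
      ((E x : EReal)) ≤ liminf (fun n => ((E (u n) : EReal))) atTop)
    (p : ℝ) (hp : 1 < p)
    (f : X →L[ℝ] ℝ)
    (lam : ℕ → ℝ) (hlam : Tendsto lam atTop atTop)
    (A : ℕ → Set X)
    -- the penalized functionals
    (Fn : ℕ → X → EReal)
    (hFn : ∀ (n : ℕ) (x : X), Fn n x =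
      if x ∈ A n then ((E x + lam n * ‖γ x‖ ^ p - f x : ℝ) : EReal) else ⊤)
    -- the limit functional
    (F : X → EReal)
    (hF : ∀ x : X, F x = if γ x = 0 then ((E x - f x : ℝ) : EReal) else ⊤) :
    (∀ (x : X) (u : ℕ → X), WeakTendsto u x →
        F x ≤ liminf (fun n => Fn n (u n)) atTop) ∧
      (∀ (x : X) (u : ℕ → X), WeakTendsto u x → γ x ≠ 0 →
        liminf (fun n => Fn n (u n)) atTop = ⊤) := by
  have lower : ∀ (x : X) (u : ℕ → X), WeakTendsto u x →
      (E x : EReal) + liminf (fun n => ((lam n * ‖γ (u n)‖ ^ p : ℝ) : EReal)) atTop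
        + ((-f x : ℝ) : EReal) ≤ liminf (fun n => Fn n (u n)) atTop := by
    refine fun x u hu => EReal.add_liminf_add_le_liminf (hElsc x u hu) (hu f).neg fun n => ?_
    rw [hFn, ← sub_eq_add_neg]
    split_ifs
    exacts [le_rfl, le_top]
  have diverge : ∀ (x : X) (u : ℕ → X), WeakTendsto u x → γ x ≠ 0 →
      liminf (fun n => Fn n (u n)) atTop = ⊤ := by
    intro x u hu hγ
    have hnorm := (hu.map γ).eventually_lt_norm (half_lt_self (norm_pos_iff.2 hγ))
    have hpen := tendsto_mul_rpow_atTop_of_eventually_le hlam (half_pos (norm_pos_iff.2 hγ))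
      (by linarith) (hnorm.mono fun _ => le_of_lt)
    have := lower x u hu
    rwa [(EReal.tendsto_coe_nhds_top_iff.2 hpen).liminf_eq, EReal.coe_add_top,
      EReal.top_add_coe, top_le_iff] at this
  refine ⟨fun x u hu => ?_, diverge⟩
  rw [hF]
  split_ifs with hγ
  · calc ((E x - f x : ℝ) : EReal) = (E x : EReal) + 0 + ((-f x : ℝ) : EReal) := by
          rw [add_zero, ← EReal.coe_add, sub_eq_add_neg]
      _ ≤ _ := by gcongr; exact zero_le_liminf_coe_mul_rpow p hlam fun _ => norm_nonneg _
      _ ≤ _ := lower x u hu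
  · rw [diverge x u hu hγ]

/-- **Liminf inequality for the penalized Deep Ritz functionals.**
In the Deep Ritz setting, for every `x ∈ X` and every sequence `(u n)` converging
weakly to `x` one has `F x ≤ liminf Fn n (u n)`; in particular if `γ x ≠ 0` then
the liminf is `∞`. -/
theorem deep_ritz_liminf_inequality
    {X B : Type*} [NormedAddCommGroup X] [NormedSpace ℝ X] [CompleteSpace X]
    [NormedAddCommGroup B] [NormedSpace ℝ B] [CompleteSpace B]
    (hXrefl : Function.Surjective (NormedSpace.inclusionInDoubleDual ℝ X))
    (hBrefl : Function.Surjective (NormedSpace.inclusionInDoubleDual ℝ B))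
    (γ : X →L[ℝ] B)
    (E : X → ℝ)
    -- E is bounded from below
    (hEbdd : ∃ m : ℝ, ∀ x : X, m ≤ E x)
    -- E is (sequentially) lower semicontinuous w.r.t. the weak topology of X
    (hElsc : ∀ (x : X) (u : ℕ → X), WeakTendsto u x →
      ((E x : EReal)) ≤ liminf (fun n => ((E (u n) : EReal))) atTop)
    -- E is continuous w.r.t. the norm topology of X
    (hEcont : Continuous E)
    (p : ℝ) (hp : 1 < p)
    (f : X →L[ℝ] ℝ)
    (lam : ℕ → ℝ) (hlam_pos : ∀ n, 0 < lam n) (hlam : Tendsto lam atTop atTop)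
    (A : ℕ → Set X)
    -- the penalized functionals
    (Fn : ℕ → X → EReal)
    (hFn : ∀ (n : ℕ) (x : X), Fn n x =
      if x ∈ A n then ((E x + lam n * ‖γ x‖ ^ p - f x : ℝ) : EReal) else ⊤)
    -- the limit functional
    (F : X → EReal)
    (hF : ∀ x : X, F x = if γ x = 0 then ((E x - f x : ℝ) : EReal) else ⊤) :
    (∀ (x : X) (u : ℕ → X), WeakTendsto u x →
        F x ≤ liminf (fun n => Fn n (u n)) atTop) ∧
      (∀ (x : X) (u : ℕ → X), WeakTendsto u x → γ x ≠ 0 →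
        liminf (fun n => Fn n (u n)) atTop = ⊤) :=
  deep_ritz_liminf_inequality_general γ E hElsc p hp f lam hlam A Fn hFn F hF
end

section
/- Recovery sequences for the penalized Deep Ritz functionals: In the Setting, assume Assumption (A1). Then for every x ∈ X there exists a sequence (x_n) in X converging weakly to x such that F_n^f(x_n) → F^f(x) as n → ∞. Specifically, for x ∉ X₀ the constant sequence x_n = x satisfies F_n^f(x) → ∞ = F^f(x), and for x ∈ X₀ the sequence provided by (A1) satisfies x_n ∈ A_n, ‖x_n − x‖_X → 0 and F_n^f(x_n) → E(x) − f(x) = F^f(x). -/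
open Filter Topology
open scoped Classical

/-- **Recovery sequences for the penalized Deep Ritz functionals.**
Under Assumption (A1), every `x ∈ X` admits a recovery sequence: a sequence
converging weakly to `x` along which `Fn n` converges to `F x`.  For `x ∉ X₀`
one may take the constant sequence (for which `Fn n x → ∞`), and for `x ∈ X₀`
the sequence from (A1) converges in norm and realizes `E x - f x`. -/
theorem deep_ritz_recovery_sequence
    {X B : Type*} [NormedAddCommGroup X] [NormedSpace ℝ X] [CompleteSpace X]
    [NormedAddCommGroup B] [NormedSpace ℝ B] [CompleteSpace B]
    (hXrefl : Function.Surjective (NormedSpace.inclusionInDoubleDual ℝ X))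
    (hBrefl : Function.Surjective (NormedSpace.inclusionInDoubleDual ℝ B))
    (γ : X →L[ℝ] B)
    (E : X → ℝ)
    -- E is bounded from below
    (hEbdd : ∃ m : ℝ, ∀ x : X, m ≤ E x)
    -- E is (sequentially) lower semicontinuous w.r.t. the weak topology of X
    (hElsc : ∀ (x : X) (u : ℕ → X), WeakTendsto u x →
      ((E x : EReal)) ≤ liminf (fun n => ((E (u n) : EReal))) atTop)
    -- E is continuous w.r.t. the norm topology of X
    (hEcont : Continuous E)
    (p : ℝ) (hp : 1 < p)
    (f : X →L[ℝ] ℝ)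
    (lam : ℕ → ℝ) (hlam_pos : ∀ n, 0 < lam n) (hlam : Tendsto lam atTop atTop)
    (A : ℕ → Set X)
    -- the penalized functionals
    (Fn : ℕ → X → EReal)
    (hFn : ∀ (n : ℕ) (x : X), Fn n x =
      if x ∈ A n then ((E x + lam n * ‖γ x‖ ^ p - f x : ℝ) : EReal) else ⊤)
    -- the limit functional
    (F : X → EReal)
    (hF : ∀ x : X, F x = if γ x = 0 then ((E x - f x : ℝ) : EReal) else ⊤)
    -- Assumption (A1)
    (hA1 : ∀ x : X, γ x = 0 → ∃ u : ℕ → X, (∀ n, u n ∈ A n) ∧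
      Tendsto u atTop (𝓝 x) ∧
      Tendsto (fun n => lam n * ‖γ (u n)‖ ^ p) atTop (𝓝 0)) :
    ∀ x : X,
      (∃ u : ℕ → X, WeakTendsto u x ∧
        Tendsto (fun n => Fn n (u n)) atTop (𝓝 (F x))) ∧
      (γ x ≠ 0 → Tendsto (fun n => Fn n x) atTop (𝓝 (⊤ : EReal)) ∧ F x = ⊤) ∧
      (γ x = 0 → ∃ u : ℕ → X, (∀ n, u n ∈ A n) ∧ Tendsto u atTop (𝓝 x) ∧
        Tendsto (fun n => Fn n (u n)) atTop (𝓝 ((E x - f x : ℝ) : EReal)) ∧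
        F x = ((E x - f x : ℝ) : EReal)) := by
  intro x
  by_cases hx : γ x = 0
  · -- x ∈ X₀ case
    obtain ⟨u, huA, huconv, hupen⟩ := hA1 x hx
    have hFx : F x = ((E x - f x : ℝ) : EReal) := by rw [hF, if_pos hx]
    have hreal : Tendsto (fun n => E (u n) + lam n * ‖γ (u n)‖ ^ p - f (u n))
        atTop (𝓝 (E x - f x)) := by
      have hE : Tendsto (fun n => E (u n)) atTop (𝓝 (E x)) :=
        (hEcont.tendsto x).comp huconv
      have hf : Tendsto (fun n => f (u n)) atTop (𝓝 (f x)) :=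
        (f.continuous.tendsto x).comp huconv
      simpa using (hE.add hupen).sub hf
    have heq : (fun n => Fn n (u n)) =
        fun n => ((E (u n) + lam n * ‖γ (u n)‖ ^ p - f (u n) : ℝ) : EReal) :=
      funext fun n => by rw [hFn, if_pos (huA n)]
    have hFconv : Tendsto (fun n => Fn n (u n)) atTop (𝓝 ((E x - f x : ℝ) : EReal)) := by
      rw [heq]
      exact (EReal.tendsto_coe).mpr hreal
    refine ⟨⟨u, fun φ => (φ.continuous.tendsto x).comp huconv, by rwa [hFx]⟩,
      fun h => absurd hx h, fun _ => ⟨u, huA, huconv, hFconv, hFx⟩⟩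
  · -- x ∉ X₀ case
    have hFx : F x = ⊤ := by rw [hF, if_neg hx]
    have hc : (0 : ℝ) < ‖γ x‖ ^ p :=
      Real.rpow_pos_of_pos (norm_pos_iff.mpr hx) p
    have htop : Tendsto (fun n => Fn n x) atTop (𝓝 (⊤ : EReal)) := by
      rw [EReal.tendsto_nhds_top_iff_real]
      intro M
      have h1 : Tendsto (fun n => E x + lam n * ‖γ x‖ ^ p - f x) atTop atTop := by
        have := (hlam.atTop_mul_const hc)
        exact tendsto_atTop_add_const_right _ _ (tendsto_atTop_add_const_left _ _ this)
      filter_upwards [h1.eventually_gt_atTop M] with n hn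
      rw [hFn]
      split_ifs with h
      · exact_mod_cast hn
      · exact EReal.coe_lt_top M
    exact ⟨⟨fun _ => x, fun φ => tendsto_const_nhds, by rwa [hFx]⟩,
      fun _ => ⟨htop, hFx⟩, fun h => absurd h hx⟩
end

section
/- Theorem (Convergence of quasi-minimizers of the Deep Ritz Method): In the Setting, assume Assumptions (A1) and (A3). Let (δ_n) be a sequence of non-negative reals converging to zero and let (x_n) be a sequence with F_n^f(x_n) ≤ inf_{z∈X} F_n^f(z) + δ_n for all n. Then (x_n) is norm-bounded in X and every weak accumulation point of (x_n) is a global minimizer of F^f. -/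
open Filter Topology
open scoped Classical

/-!
Comparing a quasi-minimizer `xₙ` with the recovery sequence of `0` from (A1) bounds
`F_n^f(xₙ)` uniformly, so (A3) gives norm-boundedness. The same bound controls the penalty
`λₙ‖γ xₙ‖ᵖ`, and since `λₙ → ∞` this forces `γ xₙ → 0`; hence a weak accumulation point `x'`
lies in the kernel `X₀`. For `z ∈ X₀`, comparing with the recovery sequence of `z` and passing
to the limit with the weak lower semicontinuity of `E` and the weak continuity of `f` gives
`E x' - f x' ≤ E z - f z`.
-/

theorem mem_and_le_of_le_iInf_add {X : Type*} {S : Set X} {g : X → ℝ} {G : X → EReal}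
    (hG : ∀ y, G y = if y ∈ S then (g y : EReal) else ⊤) {y z : X} {δ : ℝ}
    (hy : G y ≤ (⨅ w, G w) + δ) (hz : z ∈ S) : y ∈ S ∧ g y ≤ g z + δ := by
  have hyz : G y ≤ ((g z + δ : ℝ) : EReal) := by
    calc G y ≤ (⨅ w, G w) + δ := hy
      _ ≤ G z + δ := add_le_add_left (iInf_le G z) _
      _ = ((g z + δ : ℝ) : EReal) := by rw [hG z, if_pos hz, EReal.coe_add]
  have hyS : y ∈ S := by
    by_contra hyS
    rw [hG y, if_neg hyS] at hyz
    exact (EReal.coe_lt_top _).not_ge hyz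
  rw [hG y, if_pos hyS] at hyz
  exact ⟨hyS, mod_cast hyz⟩

theorem tendsto_zero_of_mul_rpow_le {lam a : ℕ → ℝ} {p K : ℝ} (hp : 0 < p)
    (hlam : Tendsto lam atTop atTop) (ha : ∀ n, 0 ≤ a n) (hK : ∀ n, lam n * a n ^ p ≤ K) :
    Tendsto a atTop (𝓝 0) := by
  have hpow : Tendsto (fun n => a n ^ p) atTop (𝓝 0) := by
    refine squeeze_zero' (Eventually.of_forall fun n => Real.rpow_nonneg (ha n) p) ?_
      ((tendsto_const_nhds (x := K)).div_atTop hlam)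
    filter_upwards [hlam.eventually_gt_atTop 0] with n hn
    rw [le_div_iff₀ hn, mul_comm]
    exact hK n
  have hroot := ((Real.continuousAt_rpow_const 0 p⁻¹ (Or.inr (by positivity))).tendsto).comp hpow
  rw [Real.zero_rpow (inv_ne_zero hp.ne')] at hroot
  refine hroot.congr fun n => ?_
  simp only [Function.comp_apply, Real.rpow_rpow_inv (ha n) hp.ne']

theorem le_of_le_liminf_coe_of_tendsto {c L : ℝ} {b w : ℕ → ℝ}
    (hc : (c : EReal) ≤ liminf (fun n => (b n : EReal)) atTop) (hbw : ∀ n, b n ≤ w n)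
    (hw : Tendsto w atTop (𝓝 L)) : c ≤ L := by
  have hwL : Tendsto (fun n => (w n : EReal)) atTop (𝓝 (L : EReal)) :=
    (continuous_coe_real_ereal.tendsto L).comp hw
  have hcL : (c : EReal) ≤ L := by
    calc (c : EReal) ≤ liminf (fun n => (b n : EReal)) atTop := hc
      _ ≤ liminf (fun n => (w n : EReal)) atTop :=
          liminf_le_liminf (Eventually.of_forall fun n => EReal.coe_le_coe_iff.2 (hbw n))
      _ = L := hwL.liminf_eq
  exact mod_cast hcL

section Normed

variable {X B : Type*} [NormedAddCommGroup X] [NormedSpace ℝ X]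
  [NormedAddCommGroup B] [NormedSpace ℝ B]

theorem WeakTendsto.comp_continuousLinearMap {u : ℕ → X} {x : X} (h : WeakTendsto u x)
    (T : X →L[ℝ] B) : WeakTendsto (T ∘ u) (T x) :=
  fun ψ => h (ψ.comp T)

theorem WeakTendsto.eq_of_tendsto {u : ℕ → X} {x y : X} (hw : WeakTendsto u x)
    (hu : Tendsto u atTop (𝓝 y)) : x = y :=
  (SeparatingDual.eq_iff_forall_dual_eq (R := ℝ)).2 fun ψ =>
    tendsto_nhds_unique (hw ψ) ((ψ.continuous.tendsto y).comp hu)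

theorem tendsto_penalized_of_recovery {E : X → ℝ} {γ : X →L[ℝ] B} {f : X →L[ℝ] ℝ}
    {p : ℝ} {lam : ℕ → ℝ} {u : ℕ → X} {z : X} (hE : ContinuousAt E z)
    (hu : Tendsto u atTop (𝓝 z)) (hpen : Tendsto (fun n => lam n * ‖γ (u n)‖ ^ p) atTop (𝓝 0)) :
    Tendsto (fun n => E (u n) + lam n * ‖γ (u n)‖ ^ p - f (u n)) atTop (𝓝 (E z - f z)) := by
  simpa using ((hE.tendsto.comp hu).add hpen).sub ((f.continuous.tendsto z).comp hu)

theorem tendsto_zero_of_penalized_le {E : X → ℝ} {γ : X →L[ℝ] B} {f : X →L[ℝ] ℝ}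
    {p m r C : ℝ} {lam : ℕ → ℝ} {u : ℕ → X} (hp : 0 < p) (hlam : Tendsto lam atTop atTop)
    (hm : ∀ n, m ≤ E (u n)) (hC : ∀ n, ‖u n‖ ≤ C)
    (hr : ∀ n, E (u n) + lam n * ‖γ (u n)‖ ^ p - f (u n) ≤ r) :
    Tendsto (fun n => γ (u n)) atTop (𝓝 0) := by
  refine tendsto_zero_iff_norm_tendsto_zero.2 <| tendsto_zero_of_mul_rpow_le (K := r - m + ‖f‖ * C)
    hp hlam (fun n => norm_nonneg _) fun n => ?_
  have hf : f (u n) ≤ ‖f‖ * C :=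
    (le_abs_self _).trans <| (f.le_opNorm _).trans <| mul_le_mul_of_nonneg_left (hC n) (norm_nonneg f)
  linarith [hm n, hr n]

theorem sub_le_sub_of_penalized_le_recovery {E : X → ℝ} {γ : X →L[ℝ] B} {f : X →L[ℝ] ℝ}
    {p : ℝ} {lam δ : ℕ → ℝ} {v u : ℕ → X} {x z : X}
    (hElsc : (E x : EReal) ≤ liminf (fun n => (E (v n) : EReal)) atTop) (hv : WeakTendsto v x)
    (hE : ContinuousAt E z) (hu : Tendsto u atTop (𝓝 z))
    (hupen : Tendsto (fun n => lam n * ‖γ (u n)‖ ^ p) atTop (𝓝 0)) (hδ : Tendsto δ atTop (𝓝 0))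
    (hlam : ∀ n, 0 ≤ lam n)
    (hle : ∀ n, E (v n) + lam n * ‖γ (v n)‖ ^ p - f (v n) ≤
      E (u n) + lam n * ‖γ (u n)‖ ^ p - f (u n) + δ n) :
    E x - f x ≤ E z - f z := by
  have hlim := ((tendsto_penalized_of_recovery (f := f) hE hu hupen).add hδ).add (hv f)
  have hEx : E x ≤ E z - f z + 0 + f x := le_of_le_liminf_coe_of_tendsto hElsc (fun n => by
    have hpen := mul_nonneg (hlam n) (Real.rpow_nonneg (norm_nonneg (γ (v n))) p)
    linarith [hle n]) hlim
  linarith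

end Normed

theorem deep_ritz_quasi_minimizers_general
    {X B : Type*} [NormedAddCommGroup X] [NormedSpace ℝ X]
    [NormedAddCommGroup B] [NormedSpace ℝ B]
    (γ : X →L[ℝ] B)
    (E : X → ℝ)
    -- E is bounded from below
    (hEbdd : ∃ m : ℝ, ∀ x : X, m ≤ E x)
    -- E is (sequentially) lower semicontinuous w.r.t. the weak topology of X
    (hElsc : ∀ (x : X) (u : ℕ → X), WeakTendsto u x →
      ((E x : EReal)) ≤ liminf (fun n => ((E (u n) : EReal))) atTop)
    -- E is continuous w.r.t. the norm topology of X
    (hEcont : Continuous E)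
    (p : ℝ) (hp : 1 < p)
    (f : X →L[ℝ] ℝ)
    (lam : ℕ → ℝ) (hlam_pos : ∀ n, 0 < lam n) (hlam : Tendsto lam atTop atTop)
    (A : ℕ → Set X)
    -- the penalized functionals
    (Fn : ℕ → X → EReal)
    (hFn : ∀ (n : ℕ) (x : X), Fn n x =
      if x ∈ A n then ((E x + lam n * ‖γ x‖ ^ p - f x : ℝ) : EReal) else ⊤)
    -- the limit functional
    (F : X → EReal)
    (hF : ∀ x : X, F x = if γ x = 0 then ((E x - f x : ℝ) : EReal) else ⊤)
    -- Assumption (A1)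
    (hA1 : ∀ x : X, γ x = 0 → ∃ u : ℕ → X, (∀ n, u n ∈ A n) ∧
      Tendsto u atTop (𝓝 x) ∧
      Tendsto (fun n => lam n * ‖γ (u n)‖ ^ p) atTop (𝓝 0))
    -- Assumption (A3): equi-coercivity
    (hA3 : ∀ r : ℝ, ∃ C : ℝ, ∀ (n : ℕ) (x : X), Fn n x ≤ (r : EReal) → ‖x‖ ≤ C)
    -- quasi-minimizers
    (x : ℕ → X) (δ : ℕ → ℝ) (hδ : Tendsto δ atTop (𝓝 0))
    (hqm : ∀ n, Fn n (x n) ≤ (⨅ z : X, Fn n z) + (δ n : EReal)) :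
    (∃ C : ℝ, ∀ n, ‖x n‖ ≤ C) ∧
      ∀ x' : X, (∃ φ : ℕ → ℕ, StrictMono φ ∧ WeakTendsto (x ∘ φ) x') →
        ∀ z : X, F x' ≤ F z := by
  have hcmp : ∀ u : ℕ → X, (∀ n, u n ∈ A n) → ∀ n, x n ∈ A n ∧
      E (x n) + lam n * ‖γ (x n)‖ ^ p - f (x n) ≤
        E (u n) + lam n * ‖γ (u n)‖ ^ p - f (u n) + δ n :=
    fun u hu n => mem_and_le_of_le_iInf_add (hFn n) (hqm n) (hu n)
  obtain ⟨u₀, hu₀A, hu₀, hu₀pen⟩ := hA1 0 (map_zero γ)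
  obtain ⟨r, hr⟩ :=
    ((tendsto_penalized_of_recovery (f := f) hEcont.continuousAt hu₀ hu₀pen).add hδ).bddAbove_range
  have hxr : ∀ n, E (x n) + lam n * ‖γ (x n)‖ ^ p - f (x n) ≤ r :=
    fun n => (hcmp u₀ hu₀A n).2.trans (hr ⟨n, rfl⟩)
  obtain ⟨C, hC⟩ := hA3 r
  have hxC : ∀ n, ‖x n‖ ≤ C := fun n =>
    hC n (x n) (by rw [hFn, if_pos (hcmp u₀ hu₀A n).1]; exact mod_cast hxr n)
  refine ⟨⟨C, hxC⟩, ?_⟩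
  rintro x' ⟨φ, hφ, hweak⟩ z
  have hφ' := hφ.tendsto_atTop
  obtain ⟨m, hm⟩ := hEbdd
  have hγx' : γ x' = 0 := (hweak.comp_continuousLinearMap γ).eq_of_tendsto <|
    tendsto_zero_of_penalized_le (by linarith) (hlam.comp hφ')
      (fun n => hm _) (fun n => hxC _) (fun n => hxr _)
  rw [hF x', if_pos hγx', hF z]
  split_ifs with hz
  · obtain ⟨u, huA, hu, hupen⟩ := hA1 z hz
    exact EReal.coe_le_coe_iff.2 <| sub_le_sub_of_penalized_le_recovery (lam := lam ∘ φ)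
      (hElsc x' _ hweak) hweak hEcont.continuousAt (hu.comp hφ') (hupen.comp hφ') (hδ.comp hφ')
      (fun n => (hlam_pos _).le) (fun n => (hcmp u huA (φ n)).2)
  · exact le_top

/-- **Convergence of quasi-minimizers of the Deep Ritz Method.**
Under Assumptions (A1) and (A3), any sequence of `δ n`-quasi-minimizers of the
penalized functionals `(Fn n)` is norm-bounded, and every weak accumulation
point of it is a global minimizer of the limit functional `F`. -/
theorem deep_ritz_quasi_minimizers
    {X B : Type*} [NormedAddCommGroup X] [NormedSpace ℝ X] [CompleteSpace X]
    [NormedAddCommGroup B] [NormedSpace ℝ B] [CompleteSpace B]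
    (hXrefl : Function.Surjective (NormedSpace.inclusionInDoubleDual ℝ X))
    (hBrefl : Function.Surjective (NormedSpace.inclusionInDoubleDual ℝ B))
    (γ : X →L[ℝ] B)
    (E : X → ℝ)
    -- E is bounded from below
    (hEbdd : ∃ m : ℝ, ∀ x : X, m ≤ E x)
    -- E is (sequentially) lower semicontinuous w.r.t. the weak topology of X
    (hElsc : ∀ (x : X) (u : ℕ → X), WeakTendsto u x →
      ((E x : EReal)) ≤ liminf (fun n => ((E (u n) : EReal))) atTop)
    -- E is continuous w.r.t. the norm topology of X
    (hEcont : Continuous E)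
    (p : ℝ) (hp : 1 < p)
    (f : X →L[ℝ] ℝ)
    (lam : ℕ → ℝ) (hlam_pos : ∀ n, 0 < lam n) (hlam : Tendsto lam atTop atTop)
    (A : ℕ → Set X)
    -- the penalized functionals
    (Fn : ℕ → X → EReal)
    (hFn : ∀ (n : ℕ) (x : X), Fn n x =
      if x ∈ A n then ((E x + lam n * ‖γ x‖ ^ p - f x : ℝ) : EReal) else ⊤)
    -- the limit functional
    (F : X → EReal)
    (hF : ∀ x : X, F x = if γ x = 0 then ((E x - f x : ℝ) : EReal) else ⊤)
    -- Assumption (A1)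
    (hA1 : ∀ x : X, γ x = 0 → ∃ u : ℕ → X, (∀ n, u n ∈ A n) ∧
      Tendsto u atTop (𝓝 x) ∧
      Tendsto (fun n => lam n * ‖γ (u n)‖ ^ p) atTop (𝓝 0))
    -- Assumption (A3): equi-coercivity
    (hA3 : ∀ r : ℝ, ∃ C : ℝ, ∀ (n : ℕ) (x : X), Fn n x ≤ (r : EReal) → ‖x‖ ≤ C)
    -- quasi-minimizers
    (x : ℕ → X) (δ : ℕ → ℝ) (hδ0 : ∀ n, 0 ≤ δ n) (hδ : Tendsto δ atTop (𝓝 0))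
    (hqm : ∀ n, Fn n (x n) ≤ (⨅ z : X, Fn n z) + (δ n : EReal)) :
    (∃ C : ℝ, ∀ n, ‖x n‖ ≤ C) ∧
      ∀ x' : X, (∃ φ : ℕ → ℕ, StrictMono φ ∧ WeakTendsto (x ∘ φ) x') →
        ∀ z : X, F x' ≤ F z :=
  deep_ritz_quasi_minimizers_general γ E hEbdd hElsc hEcont p hp f lam hlam_pos hlam A Fn hFn F hF
    hA1 hA3 x δ hδ hqm
end

section
/- Lemma (Compactness of the solution operator): In the two-norm Setting with Assumptions (A4) and (A5), define T : Y* → Y by T(g) = j(S((g∘j)|_{X₀})), i.e. T(g) is the image under j of the unique minimizer in X₀ of F^{g∘j}. Then T maps weakly convergent sequences to norm-convergent sequences: if g_n converges weakly to g in Y*, then ‖T(g_n) − T(g)‖_Y → 0. -/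
/-!
A weakly-* convergent sequence `g n → g₀` in `Y*` is bounded (Banach–Steinhaus). Bounded sequences
in the reflexive space `X` have weakly convergent subsequences (sequential Banach–Alaoglu in the
bidual of their closed span, which is separable and reflexive and so has a separable dual). Hence
the completely continuous `j` maps bounded sequences to sequences with norm-convergent
subsequences, and its adjoint `g ↦ g ∘ j` turns `g n → g₀` into norm convergence in `X*`.
Restricting to `X₀`, demi-continuity of `S` gives weak convergence of the minimizers, and complete
continuity of `j` upgrades it to norm convergence in `Y`.
-/

open Filter Topology
open scoped Classical

open TopologicalSpace NormedSpace

section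

variable {E F : Type*} [NormedAddCommGroup E] [NormedSpace ℝ E] [NormedAddCommGroup F]
  [NormedSpace ℝ F]

theorem Submodule.exists_strongDual_eq_zero_on_apply_ne_zero (Z : Submodule ℝ E)
    (hZ : IsClosed (Z : Set E)) {x : E} (hx : x ∉ Z) :
    ∃ f : StrongDual ℝ E, (∀ z ∈ Z, f z = 0) ∧ f x ≠ 0 := by
  -- the instance making `E ⧸ Z` a normed space, hence one with a separating dual
  have := hZ
  obtain ⟨f, hf⟩ :=
    SeparatingDual.exists_ne_zero (R := ℝ) ((Submodule.Quotient.mk_eq_zero Z).not.mpr hx)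
  exact ⟨f.comp Z.mkQL, fun z hz => by simp [(Submodule.Quotient.mk_eq_zero Z).mpr hz], hf⟩

theorem Submodule.surjective_inclusionInDoubleDual_of_isClosed
    (hE : Function.Surjective (inclusionInDoubleDual ℝ E))
    (Z : Submodule ℝ E) (hZ : IsClosed (Z : Set E)) :
    Function.Surjective (inclusionInDoubleDual ℝ Z) := by
  intro Φ
  obtain ⟨x, hx⟩ := hE (Φ.comp ((ContinuousLinearMap.compL ℝ Z E ℝ).flip Z.subtypeL))
  have hxf : ∀ f : StrongDual ℝ E, f x = Φ (f.comp Z.subtypeL) := fun f =>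
    congrArg (fun L => L f) hx
  have hxZ : x ∈ Z := by
    by_contra hxZ
    obtain ⟨f, hfZ, hfx⟩ := Z.exists_strongDual_eq_zero_on_apply_ne_zero hZ hxZ
    have : f.comp Z.subtypeL = 0 := by ext z; exact hfZ z z.2
    exact hfx (by rw [hxf, this, map_zero])
  refine ⟨⟨x, hxZ⟩, ContinuousLinearMap.ext fun g => ?_⟩
  obtain ⟨f, hf, -⟩ := exists_extension_norm_eq Z g
  have hfg : f.comp Z.subtypeL = g := ContinuousLinearMap.ext hf
  calc g ⟨x, hxZ⟩ = f x := (hf _).symm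
    _ = Φ g := by rw [hxf, hfg]

theorem isSeparable_topologicalClosure_span_range (x : ℕ → E) :
    IsSeparable ((Submodule.span ℝ (Set.range x)).topologicalClosure : Set E) := by
  rw [Submodule.topologicalClosure_coe]
  exact (Set.countable_range x).isSeparable.span.closure

theorem separableSpace_of_separableSpace_strongDual [SeparableSpace (StrongDual ℝ E)] :
    SeparableSpace E := by
  obtain ⟨f, hf⟩ := exists_dense_seq (StrongDual ℝ E)
  have hnorming : ∀ i, ∃ x : E, ‖x‖ ≤ 1 ∧ ‖f i‖ / 2 ≤ ‖f i x‖ := by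
    intro i
    by_cases hfi : f i = 0
    · exact ⟨0, by simp, by simp [hfi]⟩
    · obtain ⟨x, hx, hfx⟩ := (f i).exists_lt_apply_of_lt_opNorm
        (half_lt_self (norm_pos_iff.mpr hfi))
      exact ⟨x, hx.le, hfx.le⟩
  choose x hx hfx using hnorming
  set M := (Submodule.span ℝ (Set.range x)).topologicalClosure
  have hM : (M : Set E) = Set.univ := by
    refine Set.eq_univ_of_forall fun y => ?_
    by_contra hy
    obtain ⟨g, hgM, hgy⟩ := M.exists_strongDual_eq_zero_on_apply_ne_zero
      (Submodule.isClosed_topologicalClosure _) hy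
    have hg : 0 < ‖g‖ := norm_pos_iff.mpr fun h => hgy (by simp [h])
    obtain ⟨i, hi⟩ := hf.exists_dist_lt g (by positivity : 0 < ‖g‖ / 3)
    rw [dist_eq_norm] at hi
    have hgx : g (x i) = 0 :=
      hgM _ (Submodule.le_topologicalClosure _ (Submodule.subset_span ⟨i, rfl⟩))
    have hsmall : ‖f i (x i)‖ ≤ ‖g - f i‖ := by
      calc ‖f i (x i)‖ = ‖(g - f i) (x i)‖ := by simp [hgx]
        _ ≤ ‖g - f i‖ * 1 := (g - f i).le_opNorm_of_le (hx i)
        _ = ‖g - f i‖ := mul_one _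
    have hlarge : ‖g‖ ≤ ‖g - f i‖ + ‖f i‖ := norm_le_norm_sub_add g (f i)
    linarith [hfx i]
  exact isSeparable_univ_iff.mp (hM ▸ isSeparable_topologicalClosure_span_range x)

theorem separableSpace_strongDual_of_surjective_inclusionInDoubleDual [SeparableSpace E]
    (hE : Function.Surjective (inclusionInDoubleDual ℝ E)) :
    SeparableSpace (StrongDual ℝ E) :=
  have : SeparableSpace (StrongDual ℝ (StrongDual ℝ E)) :=
    hE.denseRange.separableSpace (inclusionInDoubleDual ℝ E).continuous
  separableSpace_of_separableSpace_strongDual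

theorem exists_weakTendsto_subseq_of_separableSpace [SeparableSpace E]
    (hE : Function.Surjective (inclusionInDoubleDual ℝ E)) {x : ℕ → E} {C : ℝ}
    (hx : ∀ n, ‖x n‖ ≤ C) : ∃ φ : ℕ → ℕ, StrictMono φ ∧ ∃ z, WeakTendsto (x ∘ φ) z := by
  have := separableSpace_strongDual_of_surjective_inclusionInDoubleDual hE
  let v : ℕ → WeakDual ℝ (StrongDual ℝ E) := fun n =>
    StrongDual.toWeakDual (inclusionInDoubleDual ℝ E (x n))
  obtain ⟨w, -, φ, hφ, hw⟩ := WeakDual.isSeqCompact_closedBall ℝ _ 0 C (x := v) fun n => by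
    simp only [v, Set.mem_preimage, StrongDual.toStrongDual_toWeakDual]
    exact mem_closedBall_zero_iff.mpr ((double_dual_bound ℝ E (x n)).trans (hx n))
  obtain ⟨z, hz⟩ := hE (WeakDual.toStrongDual w)
  refine ⟨φ, hφ, z, fun f => ?_⟩
  have hwz : w f = f z := by rw [← WeakDual.toStrongDual_apply, ← hz]; rfl
  exact hwz ▸ ((WeakDual.eval_continuous f).tendsto w).comp hw

theorem exists_weakTendsto_subseq_of_bounded
    (hE : Function.Surjective (inclusionInDoubleDual ℝ E)) {x : ℕ → E} {C : ℝ}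
    (hx : ∀ n, ‖x n‖ ≤ C) : ∃ φ : ℕ → ℕ, StrictMono φ ∧ ∃ z, WeakTendsto (x ∘ φ) z := by
  set Z := (Submodule.span ℝ (Set.range x)).topologicalClosure
  have hZ : IsClosed (Z : Set E) := Submodule.isClosed_topologicalClosure _
  have : SeparableSpace Z := (isSeparable_topologicalClosure_span_range x).separableSpace
  let xZ : ℕ → Z := fun n =>
    ⟨x n, Submodule.le_topologicalClosure _ (Submodule.subset_span ⟨n, rfl⟩)⟩
  obtain ⟨φ, hφ, z, hz⟩ := exists_weakTendsto_subseq_of_separableSpace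
    (Z.surjective_inclusionInDoubleDual_of_isClosed hE hZ) (x := xZ) hx
  exact ⟨φ, hφ, z, fun f => hz (f.comp Z.subtypeL)⟩

theorem tendsto_apply_apply_of_forall_tendsto_apply_zero {h : ℕ → StrongDual ℝ F} {C : ℝ}
    (hC : ∀ n, ‖h n‖ ≤ C) (hh : ∀ y, Tendsto (fun n => h n y) atTop (𝓝 0))
    {y : ℕ → F} {y₀ : F} (hy : Tendsto y atTop (𝓝 y₀)) :
    Tendsto (fun n => h n (y n)) atTop (𝓝 0) := by
  have hnear : Tendsto (fun n => h n (y n - y₀)) atTop (𝓝 0) := by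
    refine squeeze_zero_norm (fun n => (h n).le_of_opNorm_le (hC n) _) ?_
    simpa using (tendsto_iff_norm_sub_tendsto_zero.mp hy).const_mul C
  simpa using hnear.add (hh y₀)

def ContinuousLinearMap.IsCompletelyContinuous (j : E →L[ℝ] F) : Prop :=
  ∀ (u : ℕ → E) (x : E), WeakTendsto u x → Tendsto (fun n => j (u n)) atTop (𝓝 (j x))

theorem ContinuousLinearMap.IsCompletelyContinuous.tendsto_comp [CompleteSpace F]
    (hE : Function.Surjective (inclusionInDoubleDual ℝ E)) {j : E →L[ℝ] F}
    (hj : j.IsCompletelyContinuous) {g : ℕ → StrongDual ℝ F} {g₀ : StrongDual ℝ F}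
    (hg : ∀ y, Tendsto (fun n => g n y) atTop (𝓝 (g₀ y))) :
    Tendsto (fun n => (g n).comp j) atTop (𝓝 (g₀.comp j)) := by
  have hnull : ∀ y, Tendsto (fun n => (g n - g₀) y) atTop (𝓝 0) := fun y => by
    simpa using (hg y).sub_const (g₀ y)
  obtain ⟨C, hC⟩ := banach_steinhaus fun y =>
    have ⟨C, hC⟩ := (hnull y).norm.bddAbove_range
    ⟨C, fun n => hC ⟨n, rfl⟩⟩
  -- Norming vectors `x n` reduce the claim to `(g n - g₀) (j (x n)) → 0`, which holds along a
  -- subsequence of every subsequence since `j` maps weakly convergent subsequences of `x` to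
  -- norm-convergent ones.
  have hnorming : ∀ n, ∃ x : E, ‖x‖ < 1 ∧
      ‖(g n - g₀).comp j‖ - 1 / (n + 1) < ‖(g n - g₀) (j x)‖ := fun n =>
    ((g n - g₀).comp j).exists_lt_apply_of_lt_opNorm (sub_lt_self _ Nat.one_div_pos_of_nat)
  choose x hx hxnorm using hnorming
  have happly : Tendsto (fun n => (g n - g₀) (j (x n))) atTop (𝓝 0) := by
    refine tendsto_of_subseq_tendsto fun ns hns => ?_
    obtain ⟨φ, hφ, z, hz⟩ := exists_weakTendsto_subseq_of_bounded hE (x := x ∘ ns) (C := 1)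
      fun n => (hx _).le
    exact ⟨φ, tendsto_apply_apply_of_forall_tendsto_apply_zero (fun n => hC _)
      (fun y => (hnull y).comp (hns.comp hφ.tendsto_atTop)) (hj _ _ hz)⟩
  rw [tendsto_iff_norm_sub_tendsto_zero]
  have hbound :
      Tendsto (fun n : ℕ => ‖(g n - g₀) (j (x n))‖ + 1 / ((n : ℝ) + 1)) atTop (𝓝 0) := by
    simpa using happly.norm.add tendsto_one_div_add_atTop_nhds_zero_nat
  refine squeeze_zero (fun n => norm_nonneg _) (fun n => ?_) hbound
  rw [← ContinuousLinearMap.sub_comp]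
  linarith [hxnorm n]

end

theorem deep_ritz_solution_operator_compact_general
    {X B Y : Type*} [NormedAddCommGroup X] [NormedSpace ℝ X]
    [NormedAddCommGroup B] [NormedSpace ℝ B]
    [NormedAddCommGroup Y] [NormedSpace ℝ Y] [CompleteSpace Y]
    (hXrefl : Function.Surjective (NormedSpace.inclusionInDoubleDual ℝ X))
    (γ : X →L[ℝ] B)
    -- the second norm, encoded by an injective dense-range embedding j : X → Y
    (j : X →L[ℝ] Y)
    -- Assumption (A4): j is completely continuous
    (hA4 : ∀ (u : ℕ → X) (x : X), WeakTendsto u x →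
      Tendsto (fun n => j (u n)) atTop (𝓝 (j x)))
    -- Assumption (A5): unique minimizers and a demi-continuous solution map S
    (S : (↥(LinearMap.ker (γ : X →ₗ[ℝ] B)) →L[ℝ] ℝ) → ↥(LinearMap.ker (γ : X →ₗ[ℝ] B)))
    (hS_demi : ∀ (φ : ℕ → (↥(LinearMap.ker (γ : X →ₗ[ℝ] B)) →L[ℝ] ℝ))
      (φ₀ : ↥(LinearMap.ker (γ : X →ₗ[ℝ] B)) →L[ℝ] ℝ), Tendsto φ atTop (𝓝 φ₀) →
      ∀ ψ : ↥(LinearMap.ker (γ : X →ₗ[ℝ] B)) →L[ℝ] ℝ,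
        Tendsto (fun n => ψ (S (φ n))) atTop (𝓝 (ψ (S φ₀)))) :
    -- T maps weakly convergent sequences to norm-convergent ones
    ∀ (g : ℕ → (Y →L[ℝ] ℝ)) (g₀ : Y →L[ℝ] ℝ),
      (∀ y : Y, Tendsto (fun n => g n y) atTop (𝓝 (g₀ y))) →
      Tendsto (fun n =>
          ‖j ((S (((g n).comp j).comp (LinearMap.ker (γ : X →ₗ[ℝ] B)).subtypeL) : X)) -
            j ((S ((g₀.comp j).comp (LinearMap.ker (γ : X →ₗ[ℝ] B)).subtypeL) : X))‖)
        atTop (𝓝 0) := by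
  intro g g₀ hg
  let K := LinearMap.ker (γ : X →ₗ[ℝ] B)
  have hrestrict : Tendsto (fun n => ((g n).comp j).comp K.subtypeL) atTop
      (𝓝 ((g₀.comp j).comp K.subtypeL)) :=
    ((ContinuousLinearMap.precomp ℝ K.subtypeL).continuous.tendsto _).comp
      (ContinuousLinearMap.IsCompletelyContinuous.tendsto_comp hXrefl hA4 hg)
  have hweak : WeakTendsto (fun n => (S (((g n).comp j).comp K.subtypeL) : X))
      (S ((g₀.comp j).comp K.subtypeL)) := fun f =>
    hS_demi _ _ hrestrict (f.comp K.subtypeL)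
  exact tendsto_iff_norm_sub_tendsto_zero.mp (hA4 _ _ hweak)

/-- **Compactness of the solution operator.**
In the two-norm Deep Ritz setting with Assumptions (A4) and (A5), the operator
`T : Y* → Y`, `T g = j (S ((g ∘ j)|_{X₀}))`, maps weakly convergent sequences in
`Y*` to norm-convergent sequences in `Y`. -/
theorem deep_ritz_solution_operator_compact
    {X B Y : Type*} [NormedAddCommGroup X] [NormedSpace ℝ X] [CompleteSpace X]
    [NormedAddCommGroup B] [NormedSpace ℝ B] [CompleteSpace B]
    [NormedAddCommGroup Y] [NormedSpace ℝ Y] [CompleteSpace Y]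
    (hXrefl : Function.Surjective (NormedSpace.inclusionInDoubleDual ℝ X))
    (hBrefl : Function.Surjective (NormedSpace.inclusionInDoubleDual ℝ B))
    (hYrefl : Function.Surjective (NormedSpace.inclusionInDoubleDual ℝ Y))
    (γ : X →L[ℝ] B)
    (E : X → ℝ)
    -- E is bounded from below
    (hEbdd : ∃ m : ℝ, ∀ x : X, m ≤ E x)
    -- E is (sequentially) lower semicontinuous w.r.t. the weak topology of X
    (hElsc : ∀ (x : X) (u : ℕ → X), WeakTendsto u x →
      ((E x : EReal)) ≤ liminf (fun n => ((E (u n) : EReal))) atTop)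
    -- E is continuous w.r.t. the norm topology of X
    (hEcont : Continuous E)
    (p : ℝ) (hp : 1 < p)
    (lam : ℕ → ℝ) (hlam_pos : ∀ n, 0 < lam n) (hlam : Tendsto lam atTop atTop)
    (A : ℕ → Set X)
    -- the limit functionals with right-hand side f
    (F : (X →L[ℝ] ℝ) → X → EReal)
    (hF : ∀ (f : X →L[ℝ] ℝ) (x : X),
      F f x = if γ x = 0 then ((E x - f x : ℝ) : EReal) else ⊤)
    -- the second norm, encoded by an injective dense-range embedding j : X → Y
    (j : X →L[ℝ] Y) (hj_inj : Function.Injective j) (hj_dense : DenseRange j)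
    -- Assumption (A4): j is completely continuous
    (hA4 : ∀ (u : ℕ → X) (x : X), WeakTendsto u x →
      Tendsto (fun n => j (u n)) atTop (𝓝 (j x)))
    -- Assumption (A5): unique minimizers and a demi-continuous solution map S
    (S : (↥(LinearMap.ker (γ : X →ₗ[ℝ] B)) →L[ℝ] ℝ) → ↥(LinearMap.ker (γ : X →ₗ[ℝ] B)))
    (hS_min : ∀ (f : X →L[ℝ] ℝ) (z : X),
      F f ((S (f.comp (LinearMap.ker (γ : X →ₗ[ℝ] B)).subtypeL) : X)) ≤ F f z)
    (hS_uniq : ∀ (f : X →L[ℝ] ℝ) (y : X), γ y = 0 →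
      (∀ z : X, F f y ≤ F f z) → y = (S (f.comp (LinearMap.ker (γ : X →ₗ[ℝ] B)).subtypeL) : X))
    (hS_demi : ∀ (φ : ℕ → (↥(LinearMap.ker (γ : X →ₗ[ℝ] B)) →L[ℝ] ℝ))
      (φ₀ : ↥(LinearMap.ker (γ : X →ₗ[ℝ] B)) →L[ℝ] ℝ), Tendsto φ atTop (𝓝 φ₀) →
      ∀ ψ : ↥(LinearMap.ker (γ : X →ₗ[ℝ] B)) →L[ℝ] ℝ,
        Tendsto (fun n => ψ (S (φ n))) atTop (𝓝 (ψ (S φ₀)))) :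
    -- T maps weakly convergent sequences to norm-convergent ones
    ∀ (g : ℕ → (Y →L[ℝ] ℝ)) (g₀ : Y →L[ℝ] ℝ),
      (∀ y : Y, Tendsto (fun n => g n y) atTop (𝓝 (g₀ y))) →
      Tendsto (fun n =>
          ‖j ((S (((g n).comp j).comp (LinearMap.ker (γ : X →ₗ[ℝ] B)).subtypeL) : X)) -
            j ((S ((g₀.comp j).comp (LinearMap.ker (γ : X →ₗ[ℝ] B)).subtypeL) : X))‖)
        atTop (𝓝 0) :=
  deep_ritz_solution_operator_compact_general hXrefl γ j hA4 S hS_demi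
end

section
/- Proposition (Γ-convergence with varying right-hand sides): In the two-norm Setting with Assumptions (A1) and (A4) (Assumption (A5) is not needed), let g_n, g ∈ Y* with g_n converging weakly to g in Y*, and set f_n = g_n∘j ∈ X* and f = g∘j ∈ X*. Then the sequence of functionals (F_n^{f_n}) Γ-converges to F^f with respect to the weak topology of X, i.e.: (i) for every x ∈ X and every sequence (x_n) converging weakly to x in X, F^f(x) ≤ liminf_{n→∞} F_n^{f_n}(x_n); and (ii) for every x ∈ X there exists a sequence (x_n) converging weakly to x with F_n^{f_n}(x_n) → F^f(x). -/
/-!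
By Banach–Steinhaus the weakly convergent `g n` are uniformly bounded, so `g n (y n) → g₀ y₀`
whenever `y n → y₀`; with the complete continuity of `j`, `u n ⇀ x` gives
`g n (j (u n)) → g₀ (j x)`, and the varying right-hand sides become a convergent perturbation.
If `γ x = 0`, the liminf inequality is the weak lower semicontinuity of `E` (the penalty is
nonnegative) and (A1) provides recovery sequences. If `γ x ≠ 0`, weak lower semicontinuity of
the norm keeps `‖γ (u n)‖` away from zero, so the penalty `lam n * ‖γ (u n)‖ ^ p` drives the
energies to `+∞` along every weakly convergent sequence, the constant one included.
-/

open Filter Topology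
open scoped Classical

theorem ContinuousLinearMap.tendsto_apply_of_forall_tendsto {𝕜 E F : Type*}
    [NontriviallyNormedField 𝕜] [NormedAddCommGroup E] [NormedSpace 𝕜 E] [CompleteSpace E]
    [NormedAddCommGroup F] [NormedSpace 𝕜 F] {g : ℕ → E →L[𝕜] F} {g₀ : E →L[𝕜] F}
    (hg : ∀ y, Tendsto (fun n => g n y) atTop (𝓝 (g₀ y))) {y : ℕ → E} {y₀ : E}
    (hy : Tendsto y atTop (𝓝 y₀)) : Tendsto (fun n => g n (y n)) atTop (𝓝 (g₀ y₀)) := by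
  obtain ⟨C, hC⟩ : ∃ C, ∀ n, ‖g n‖ ≤ C := banach_steinhaus fun y => by
    obtain ⟨C, hC⟩ := (hg y).norm.bddAbove_range
    exact ⟨C, fun n => hC ⟨n, rfl⟩⟩
  have hsmall : Tendsto (fun n => g n (y n - y₀)) atTop (𝓝 0) := by
    refine squeeze_zero_norm (fun n => ?_)
      (by simpa using (tendsto_iff_norm_sub_tendsto_zero.mp hy).const_mul C)
    exact (g n).le_opNorm _ |>.trans (mul_le_mul_of_nonneg_right (hC n) (norm_nonneg _))
  simpa using hsmall.add (hg y₀)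

section WeakTendsto

variable {X : Type*} [NormedAddCommGroup X] [NormedSpace ℝ X] {u : ℕ → X} {x : X}

theorem Filter.Tendsto.weakTendsto (hu : Tendsto u atTop (𝓝 x)) : WeakTendsto u x :=
  fun φ => (φ.continuous.tendsto x).comp hu

theorem WeakTendsto.map_s9 {Z : Type*} [NormedAddCommGroup Z] [NormedSpace ℝ Z]
    (hu : WeakTendsto u x) (T : X →L[ℝ] Z) : WeakTendsto (fun n => T (u n)) (T x) :=
  fun φ => hu (φ.comp T)

theorem WeakTendsto.eventually_lt_norm_s9 (hu : WeakTendsto u x) {r : ℝ} (hr : r < ‖x‖) :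
    ∀ᶠ n in atTop, r < ‖u n‖ := by
  rcases eq_or_ne x 0 with rfl | hx
  · rw [norm_zero] at hr
    exact .of_forall fun n => hr.trans_le (norm_nonneg _)
  obtain ⟨φ, hφ, hφx⟩ := exists_dual_vector ℝ x (norm_ne_zero_iff.mpr hx)
  have hφu : Tendsto (fun n => φ (u n)) atTop (𝓝 ‖x‖) := by simpa [hφx] using hu φ
  filter_upwards [hφu.eventually_const_lt hr] with n hn
  calc r < φ (u n) := hn
    _ ≤ ‖φ (u n)‖ := Real.le_norm_self _
    _ ≤ ‖φ‖ * ‖u n‖ := φ.le_opNorm _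
    _ = ‖u n‖ := by rw [hφ, one_mul]

end WeakTendsto

theorem EReal.le_liminf_coe_sub {ι : Type*} {l : Filter ι} [l.NeBot] {e c : ι → ℝ}
    {e₀ c₀ : ℝ}
    (he : (e₀ : EReal) ≤ liminf (fun n => (e n : EReal)) l) (hc : Tendsto c l (𝓝 c₀)) :
    ((e₀ - c₀ : ℝ) : EReal) ≤ liminf (fun n => ((e n - c n : ℝ) : EReal)) l := by
  have hneg : liminf (fun n => ((-c n : ℝ) : EReal)) l = ((-c₀ : ℝ) : EReal) :=
    (EReal.tendsto_coe.mpr hc.neg).liminf_eq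
  calc ((e₀ - c₀ : ℝ) : EReal) = (e₀ : EReal) + ((-c₀ : ℝ) : EReal) := by
        rw [sub_eq_add_neg, EReal.coe_add]
    _ ≤ liminf (fun n => (e n : EReal)) l + liminf (fun n => ((-c n : ℝ) : EReal)) l := by
        rw [hneg]; exact add_le_add_left he _
    _ ≤ liminf (fun n => ((e n : EReal)) + ((-c n : ℝ) : EReal)) l := EReal.le_liminf_add
    _ = liminf (fun n => ((e n - c n : ℝ) : EReal)) l := by
        simp only [sub_eq_add_neg, EReal.coe_add]

section Penalty

variable {X B : Type*} [NormedAddCommGroup X] [NormedSpace ℝ X] [NormedAddCommGroup B]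
  [NormedSpace ℝ B] {γ : X →L[ℝ] B} {E : X → ℝ} {p : ℝ} {lam c : ℕ → ℝ} {c₀ : ℝ}
  {u : ℕ → X} {x : X}

theorem le_liminf_penalized
    (hE : (E x : EReal) ≤ liminf (fun n => (E (u n) : EReal)) atTop)
    (hlam : ∀ᶠ n in atTop, 0 ≤ lam n) (hc : Tendsto c atTop (𝓝 c₀)) :
    ((E x - c₀ : ℝ) : EReal) ≤
      liminf (fun n => ((E (u n) + lam n * ‖γ (u n)‖ ^ p - c n : ℝ) : EReal)) atTop := by
  refine (EReal.le_liminf_coe_sub hE hc).trans (liminf_le_liminf ?_)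
  filter_upwards [hlam] with n hn
  have : 0 ≤ lam n * ‖γ (u n)‖ ^ p := mul_nonneg hn (Real.rpow_nonneg (norm_nonneg _) p)
  exact EReal.coe_le_coe_iff.mpr (by linarith)

theorem tendsto_penalized_atTop (hE : ∃ m, ∀ x, m ≤ E x) (hp : 0 ≤ p)
    (hlam : Tendsto lam atTop atTop) (hu : WeakTendsto u x) (hγx : γ x ≠ 0)
    (hc : Tendsto c atTop (𝓝 c₀)) :
    Tendsto (fun n => E (u n) + lam n * ‖γ (u n)‖ ^ p - c n) atTop atTop := by
  obtain ⟨m, hm⟩ := hE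
  set K := (‖γ x‖ / 2) ^ p
  have hK : 0 < K := Real.rpow_pos_of_pos (by positivity) p
  have hγu := (hu.map_s9 γ).eventually_lt_norm_s9 (half_lt_self (norm_pos_iff.mpr hγx))
  refine tendsto_atTop_mono' _ ?_
    (tendsto_atTop_add_const_right _ (m - (c₀ + 1)) (hlam.atTop_mul_const hK))
  filter_upwards [hγu, hc.eventually_lt_const (lt_add_one c₀), hlam.eventually_ge_atTop 0]
    with n hγn hcn hlamn
  have hKle : lam n * K ≤ lam n * ‖γ (u n)‖ ^ p :=
    mul_le_mul_of_nonneg_left (Real.rpow_le_rpow (by positivity) hγn.le hp) hlamn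
  linarith [hm (u n)]

end Penalty

theorem deep_ritz_gamma_convergence_varying_rhs_general
    {X B Y : Type*} [NormedAddCommGroup X] [NormedSpace ℝ X]
    [NormedAddCommGroup B] [NormedSpace ℝ B]
    [NormedAddCommGroup Y] [NormedSpace ℝ Y] [CompleteSpace Y]
    (γ : X →L[ℝ] B)
    (E : X → ℝ)
    -- E is bounded from below
    (hEbdd : ∃ m : ℝ, ∀ x : X, m ≤ E x)
    -- E is (sequentially) lower semicontinuous w.r.t. the weak topology of X
    (hElsc : ∀ (x : X) (u : ℕ → X), WeakTendsto u x →
      ((E x : EReal)) ≤ liminf (fun n => ((E (u n) : EReal))) atTop)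
    -- E is continuous w.r.t. the norm topology of X
    (hEcont : Continuous E)
    (p : ℝ) (hp : 1 < p)
    (lam : ℕ → ℝ) (hlam : Tendsto lam atTop atTop)
    (A : ℕ → Set X)
    -- the penalized functionals with right-hand side f
    (Fn : (X →L[ℝ] ℝ) → ℕ → X → EReal)
    (hFn : ∀ (f : X →L[ℝ] ℝ) (n : ℕ) (x : X), Fn f n x =
      if x ∈ A n then ((E x + lam n * ‖γ x‖ ^ p - f x : ℝ) : EReal) else ⊤)
    -- the limit functionals with right-hand side f
    (F : (X →L[ℝ] ℝ) → X → EReal)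
    (hF : ∀ (f : X →L[ℝ] ℝ) (x : X),
      F f x = if γ x = 0 then ((E x - f x : ℝ) : EReal) else ⊤)
    -- Assumption (A1)
    (hA1 : ∀ x : X, γ x = 0 → ∃ u : ℕ → X, (∀ n, u n ∈ A n) ∧
      Tendsto u atTop (𝓝 x) ∧
      Tendsto (fun n => lam n * ‖γ (u n)‖ ^ p) atTop (𝓝 0))
    -- the second norm, encoded by an injective dense-range embedding j : X → Y
    (j : X →L[ℝ] Y)
    -- Assumption (A4): j is completely continuous
    (hA4 : ∀ (u : ℕ → X) (x : X), WeakTendsto u x →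
      Tendsto (fun n => j (u n)) atTop (𝓝 (j x)))
    -- weakly convergent right-hand sides
    (g : ℕ → (Y →L[ℝ] ℝ)) (g₀ : Y →L[ℝ] ℝ)
    (hg : ∀ y : Y, Tendsto (fun n => g n y) atTop (𝓝 (g₀ y))) :
    -- liminf inequality
    (∀ (x : X) (u : ℕ → X), WeakTendsto u x →
        F (g₀.comp j) x ≤ liminf (fun n => Fn ((g n).comp j) n (u n)) atTop) ∧
      -- recovery sequences
      (∀ x : X, ∃ u : ℕ → X, WeakTendsto u x ∧
        Tendsto (fun n => Fn ((g n).comp j) n (u n)) atTop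
          (𝓝 (F (g₀.comp j) x))) := by
  have hp₀ : 0 ≤ p := zero_le_one.trans hp.le
  have hFn_ge (f : X →L[ℝ] ℝ) (n : ℕ) (x : X) :
      ((E x + lam n * ‖γ x‖ ^ p - f x : ℝ) : EReal) ≤ Fn f n x := by
    rw [hFn]; split_ifs; exacts [le_rfl, le_top]
  have hrhs {u : ℕ → X} {x : X} (hu : WeakTendsto u x) :
      Tendsto (fun n => g n (j (u n))) atTop (𝓝 (g₀ (j x))) :=
    ContinuousLinearMap.tendsto_apply_of_forall_tendsto hg (hA4 u x hu)
  refine ⟨fun x u hu => ?_, fun x => ?_⟩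
  · refine le_trans ?_ (liminf_le_liminf (.of_forall fun n => hFn_ge ((g n).comp j) n (u n)))
    rw [hF]
    split_ifs with hγx
    · exact le_liminf_penalized (hElsc x u hu) (hlam.eventually_ge_atTop 0) (hrhs hu)
    · exact (EReal.tendsto_coe_nhds_top_iff.mpr (tendsto_penalized_atTop hEbdd hp₀
        hlam hu hγx (hrhs hu))).liminf_eq.ge
  · rw [hF]
    split_ifs with hγx
    · obtain ⟨u, huA, hux, hpen⟩ := hA1 x hγx
      refine ⟨u, hux.weakTendsto, ?_⟩
      have hreal : Tendsto (fun n => E (u n) + lam n * ‖γ (u n)‖ ^ p - g n (j (u n))) atTop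
          (𝓝 (E x - g₀ (j x))) := by
        simpa using (((hEcont.tendsto x).comp hux).add hpen).sub (hrhs hux.weakTendsto)
      simpa [hFn, huA] using EReal.tendsto_coe.mpr hreal
    · have hx : WeakTendsto (fun _ => x) x := tendsto_const_nhds.weakTendsto
      exact ⟨_, hx, tendsto_nhds_top_mono (EReal.tendsto_coe_nhds_top_iff.mpr
        (tendsto_penalized_atTop hEbdd hp₀ hlam hx hγx (hrhs hx)))
        (.of_forall fun n => hFn_ge ((g n).comp j) n x)⟩

/-- **Γ-convergence with varying right-hand sides.**
In the two-norm Deep Ritz setting with Assumptions (A1) and (A4), if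
`g n ⇀ g₀` weakly in `Y*` and `f n = g n ∘ j`, `f₀ = g₀ ∘ j`, then the
functionals `(Fn (f n) n)` Γ-converge to `F f₀` with respect to the weak
topology of `X`. -/
theorem deep_ritz_gamma_convergence_varying_rhs
    {X B Y : Type*} [NormedAddCommGroup X] [NormedSpace ℝ X] [CompleteSpace X]
    [NormedAddCommGroup B] [NormedSpace ℝ B] [CompleteSpace B]
    [NormedAddCommGroup Y] [NormedSpace ℝ Y] [CompleteSpace Y]
    (hXrefl : Function.Surjective (NormedSpace.inclusionInDoubleDual ℝ X))
    (hBrefl : Function.Surjective (NormedSpace.inclusionInDoubleDual ℝ B))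
    (hYrefl : Function.Surjective (NormedSpace.inclusionInDoubleDual ℝ Y))
    (γ : X →L[ℝ] B)
    (E : X → ℝ)
    -- E is bounded from below
    (hEbdd : ∃ m : ℝ, ∀ x : X, m ≤ E x)
    -- E is (sequentially) lower semicontinuous w.r.t. the weak topology of X
    (hElsc : ∀ (x : X) (u : ℕ → X), WeakTendsto u x →
      ((E x : EReal)) ≤ liminf (fun n => ((E (u n) : EReal))) atTop)
    -- E is continuous w.r.t. the norm topology of X
    (hEcont : Continuous E)
    (p : ℝ) (hp : 1 < p)
    (lam : ℕ → ℝ) (hlam_pos : ∀ n, 0 < lam n) (hlam : Tendsto lam atTop atTop)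
    (A : ℕ → Set X)
    -- the penalized functionals with right-hand side f
    (Fn : (X →L[ℝ] ℝ) → ℕ → X → EReal)
    (hFn : ∀ (f : X →L[ℝ] ℝ) (n : ℕ) (x : X), Fn f n x =
      if x ∈ A n then ((E x + lam n * ‖γ x‖ ^ p - f x : ℝ) : EReal) else ⊤)
    -- the limit functionals with right-hand side f
    (F : (X →L[ℝ] ℝ) → X → EReal)
    (hF : ∀ (f : X →L[ℝ] ℝ) (x : X),
      F f x = if γ x = 0 then ((E x - f x : ℝ) : EReal) else ⊤)
    -- Assumption (A1)
    (hA1 : ∀ x : X, γ x = 0 → ∃ u : ℕ → X, (∀ n, u n ∈ A n) ∧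
      Tendsto u atTop (𝓝 x) ∧
      Tendsto (fun n => lam n * ‖γ (u n)‖ ^ p) atTop (𝓝 0))
    -- the second norm, encoded by an injective dense-range embedding j : X → Y
    (j : X →L[ℝ] Y) (hj_inj : Function.Injective j) (hj_dense : DenseRange j)
    -- Assumption (A4): j is completely continuous
    (hA4 : ∀ (u : ℕ → X) (x : X), WeakTendsto u x →
      Tendsto (fun n => j (u n)) atTop (𝓝 (j x)))
    -- weakly convergent right-hand sides
    (g : ℕ → (Y →L[ℝ] ℝ)) (g₀ : Y →L[ℝ] ℝ)
    (hg : ∀ y : Y, Tendsto (fun n => g n y) atTop (𝓝 (g₀ y))) :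
    -- liminf inequality
    (∀ (x : X) (u : ℕ → X), WeakTendsto u x →
        F (g₀.comp j) x ≤ liminf (fun n => Fn ((g n).comp j) n (u n)) atTop) ∧
      -- recovery sequences
      (∀ x : X, ∃ u : ℕ → X, WeakTendsto u x ∧
        Tendsto (fun n => Fn ((g n).comp j) n (u n)) atTop
          (𝓝 (F (g₀.comp j) x))) :=
  deep_ritz_gamma_convergence_varying_rhs_general γ E hEbdd hElsc hEcont p hp lam hlam A Fn hFn F hF
    hA1 j hA4 g g₀ hg
end
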